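/- Let E be a Hilbert space and Θ : 𝔻 → L(E) analytic and pointwise contractive. The Toeplitz operator T_Θ on H²(E) given by (T_Θ f)(z) = Θ(z)f(z) is unitary if and only if Θ is a constant function whose value Θ(0) is a unitary operator on E. -/

import Mathlib

/-!
The matrix of `T` is lower triangular with constant diagonals `a k = Θ⁽ᵏ⁾(0)/k!`, so the
`(m, m)` entry of `T T*` is `∑_{k ≤ m} a k (a k)*`. If `T T* = 1`, consecutive entries give
`a k (a k)* = 0`, hence `a k = 0` by the C*-identity, for every `k ≥ 1`. Then `T` acts
coordinatewise by `Θ 0`, so `T` is unitary exactly when `Θ 0` is, and the Taylor expansion of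
`Θ` on the disk shows that the vanishing of all higher coefficients means `Θ` is constant.
-/

open ContinuousLinearMap Finset Filter Topology

open scoped Nat

theorem CStarRing.eq_zero_of_sum_range_mul_star_self_eq {R : Type*} [NormedRing R] [StarRing R]
    [CStarRing R] {a : ℕ → R} {c : R} (h : ∀ m, ∑ k ∈ range (m + 1), a k * star (a k) = c)
    (k : ℕ) : a (k + 1) = 0 := by
  have hsucc := h (k + 1)
  rw [sum_range_succ, h k, add_eq_left] at hsucc
  exact (CStarRing.mul_star_self_eq_zero_iff _).mp hsucc

theorem Complex.eqOn_ball_iff_iteratedDeriv_succ_eq_zero {F : Type*} [NormedAddCommGroup F]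
    [NormedSpace ℂ F] [CompleteSpace F] {f : ℂ → F} {c : ℂ} {r : ℝ} (hr : 0 < r)
    (hf : DifferentiableOn ℂ f (Metric.ball c r)) :
    (∀ z ∈ Metric.ball c r, f z = f c) ↔ ∀ k, iteratedDeriv (k + 1) f c = 0 := by
  constructor
  · intro hconst k
    have hloc : f =ᶠ[𝓝 c] fun _ => f c := eventually_of_mem (Metric.ball_mem_nhds c hr) hconst
    rw [hloc.iteratedDeriv_eq, iteratedDeriv_const, if_neg k.succ_ne_zero]
  · intro hderiv z hz
    have hsingle :
        HasSum (fun n : ℕ => (n ! : ℂ)⁻¹ • (z - c) ^ n • iteratedDeriv n f c) (f c) := by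
      convert hasSum_single 0 fun n hn => ?_ using 1
      · simp
      · obtain ⟨k, rfl⟩ := Nat.exists_eq_succ_of_ne_zero hn
        simp [hderiv]
    exact (hasSum_taylorSeries_on_ball hf hz).unique hsingle

section Normed

variable {𝕜 E : Type*} [NormedField 𝕜] [NormedAddCommGroup E] [NormedSpace 𝕜 E]

theorem lp.eq_one_iff_of_forall_apply_eq {B : E →L[𝕜] E}
    {S : lp (fun _ : ℕ => E) 2 →L[𝕜] lp (fun _ : ℕ => E) 2} (hS : ∀ f n, S f n = B (f n)) :
    S = 1 ↔ B = 1 := by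
  constructor
  · rintro rfl
    ext x
    simpa using (hS (lp.single 2 0 x) 0).symm
  · rintro rfl
    exact ContinuousLinearMap.ext fun f => lp.ext (funext fun n => by simp [hS])

/-- Multiplication by `∑ₖ a k zᵏ` on `H²(E)`, with `H²(E)` identified with `ℓ²(ℕ, E)` through
Taylor coefficients. -/
def IsAnalyticToeplitz (a : ℕ → E →L[𝕜] E)
    (T : lp (fun _ : ℕ => E) 2 →L[𝕜] lp (fun _ : ℕ => E) 2) : Prop :=
  ∀ f n, T f n = ∑ k ∈ range (n + 1), a k (f (n - k))

namespace IsAnalyticToeplitz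

variable {a : ℕ → E →L[𝕜] E} {T : lp (fun _ : ℕ => E) 2 →L[𝕜] lp (fun _ : ℕ => E) 2}

theorem apply_single (hT : IsAnalyticToeplitz a T) (m : ℕ) (x : E) (n : ℕ) :
    T (lp.single 2 m x) n = if m ≤ n then a (n - m) x else 0 := by
  rw [hT]
  split_ifs with hmn
  · rw [sum_eq_single_of_mem (n - m) (mem_range.mpr (by omega)), Nat.sub_sub_self hmn,
      lp.single_apply_self]
    intro k hk hkm
    rw [mem_range] at hk
    rw [lp.single_apply_ne (E := fun _ : ℕ => E) 2 m x (by omega), map_zero]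
  · refine sum_eq_zero fun k hk => ?_
    rw [mem_range] at hk
    rw [lp.single_apply_ne (E := fun _ : ℕ => E) 2 m x (by omega), map_zero]

theorem apply_eq_of_coeff_succ_eq_zero (hT : IsAnalyticToeplitz a T)
    (ha : ∀ k, a (k + 1) = 0) (f : lp (fun _ : ℕ => E) 2) (n : ℕ) : T f n = a 0 (f n) := by
  simp [hT f n, sum_range_succ', ha]

end IsAnalyticToeplitz

end Normed

section Hilbert

variable {𝕜 E : Type*} [RCLike 𝕜] [NormedAddCommGroup E] [InnerProductSpace 𝕜 E]
  [CompleteSpace E]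

theorem lp.adjoint_apply_of_forall_apply_eq {A : E →L[𝕜] E}
    {T : lp (fun _ : ℕ => E) 2 →L[𝕜] lp (fun _ : ℕ => E) 2} (hT : ∀ f n, T f n = A (f n))
    (g : lp (fun _ : ℕ => E) 2) (n : ℕ) : (adjoint T g) n = adjoint A (g n) := by
  refine ext_inner_right 𝕜 fun y => ?_
  have hsingle : T (lp.single 2 n y) = lp.single 2 n (A y) := by
    refine lp.ext (funext fun j => ?_)
    rw [hT]
    rcases eq_or_ne j n with rfl | hjn
    · simp only [lp.single_apply_self]
    · simp only [lp.single_apply_ne 2 n _ hjn, map_zero]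
  rw [← lp.inner_single_right, adjoint_inner_left, hsingle, lp.inner_single_right,
    adjoint_inner_left]

theorem lp.mem_unitary_iff_of_forall_apply_eq {A : E →L[𝕜] E}
    {T : lp (fun _ : ℕ => E) 2 →L[𝕜] lp (fun _ : ℕ => E) 2} (hT : ∀ f n, T f n = A (f n)) :
    T ∈ unitary _ ↔ A ∈ unitary _ := by
  have hadj := lp.adjoint_apply_of_forall_apply_eq hT
  simp only [Unitary.mem_iff, star_eq_adjoint, ContinuousLinearMap.mul_def]
  exact and_congr (lp.eq_one_iff_of_forall_apply_eq fun f n => by simp [hadj, hT])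
    (lp.eq_one_iff_of_forall_apply_eq fun f n => by simp [hadj, hT])

namespace IsAnalyticToeplitz

variable {a : ℕ → E →L[𝕜] E} {T : lp (fun _ : ℕ => E) 2 →L[𝕜] lp (fun _ : ℕ => E) 2}

theorem adjoint_apply_single (hT : IsAnalyticToeplitz a T) (m : ℕ) (x : E) (j : ℕ) :
    (adjoint T (lp.single 2 m x)) j = if j ≤ m then adjoint (a (m - j)) x else 0 := by
  refine ext_inner_right 𝕜 fun y => ?_
  rw [← lp.inner_single_right, adjoint_inner_left, lp.inner_single_left, hT.apply_single]
  split_ifs <;> simp [adjoint_inner_left]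

theorem sum_mul_star_eq_one (hT : IsAnalyticToeplitz a T) (h : T * star T = 1) (m : ℕ) :
    ∑ k ∈ range (m + 1), a k * star (a k) = 1 := by
  ext x
  calc (∑ k ∈ range (m + 1), a k * star (a k)) x
      = ∑ k ∈ range (m + 1), a k ((adjoint T (lp.single 2 m x)) (m - k)) := by
        rw [_root_.sum_apply]
        refine sum_congr rfl fun k hk => ?_
        rw [mem_range] at hk
        rw [mul_apply_eq_comp, star_eq_adjoint, hT.adjoint_apply_single, if_pos (Nat.sub_le m k),
          Nat.sub_sub_self (by omega)]
    _ = T (adjoint T (lp.single 2 m x)) m := (hT _ m).symm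
    _ = x := by
      rw [← star_eq_adjoint, ← mul_apply_eq_comp, h, one_apply_eq_self, lp.single_apply_self]

theorem mem_unitary_iff (hT : IsAnalyticToeplitz a T) :
    T ∈ unitary _ ↔ (∀ k, a (k + 1) = 0) ∧ a 0 ∈ unitary _ := by
  constructor
  · intro hU
    have ha := CStarRing.eq_zero_of_sum_range_mul_star_self_eq
      (hT.sum_mul_star_eq_one (Unitary.mul_star_self_of_mem hU))
    exact ⟨ha, (lp.mem_unitary_iff_of_forall_apply_eq
      (hT.apply_eq_of_coeff_succ_eq_zero ha)).mp hU⟩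
  · rintro ⟨ha, hU⟩
    exact (lp.mem_unitary_iff_of_forall_apply_eq (hT.apply_eq_of_coeff_succ_eq_zero ha)).mpr hU

end IsAnalyticToeplitz

end Hilbert

theorem statement11_general (E : Type*) [NormedAddCommGroup E] [InnerProductSpace ℂ E]
    [CompleteSpace E]
    (Θ : ℂ → E →L[ℂ] E)
    (hana : ∀ z ∈ Metric.ball (0 : ℂ) 1, AnalyticAt ℂ Θ z)
    (T : lp (fun _ : ℕ => E) 2 →L[ℂ] lp (fun _ : ℕ => E) 2)
    (hT : ∀ f, ∀ n : ℕ, (T f) n =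
      ∑ k ∈ Finset.range (n + 1),
        ((k.factorial : ℂ)⁻¹ • iteratedDeriv k Θ 0) (f (n - k))) :
    (adjoint T ∘L T = 1 ∧ T ∘L adjoint T = 1) ↔
      ((∀ z ∈ Metric.ball (0 : ℂ) 1, Θ z = Θ 0) ∧
        adjoint (Θ 0) ∘L Θ 0 = 1 ∧ Θ 0 ∘L adjoint (Θ 0) = 1) := by
  set a : ℕ → E →L[ℂ] E := fun k => (k ! : ℂ)⁻¹ • iteratedDeriv k Θ 0
  have hTa : IsAnalyticToeplitz a T := hT
  have ha0 : a 0 = Θ 0 := by simp [a]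
  have hcoeff (k : ℕ) : a (k + 1) = 0 ↔ iteratedDeriv (k + 1) Θ 0 = 0 :=
    smul_eq_zero_iff_right (by simp [Nat.factorial_ne_zero])
  have hdiff : DifferentiableOn ℂ Θ (Metric.ball 0 1) := fun z hz =>
    (hana z hz).differentiableAt.differentiableWithinAt
  change T ∈ unitary _ ↔ (∀ z ∈ Metric.ball (0 : ℂ) 1, Θ z = Θ 0) ∧ Θ 0 ∈ unitary _
  rw [IsAnalyticToeplitz.mem_unitary_iff hTa, ha0,
    Complex.eqOn_ball_iff_iteratedDeriv_succ_eq_zero one_pos hdiff, forall_congr' hcoeff]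

/-- Let `Θ : 𝔻 → L(E)` be analytic and pointwise contractive, and model
`H²(E)` as `ℓ²(ℕ, E)` via Taylor coefficients. The analytic Toeplitz operator `T_Θ`
(given by convolution with the Taylor coefficients `Θ⁽ᵏ⁾(0)/k!` of `Θ`) is unitary
if and only if `Θ` is constant on the disk and its value `Θ(0)` is a unitary operator
on `E`. -/
theorem statement11 (E : Type*) [NormedAddCommGroup E] [InnerProductSpace ℂ E]
    [CompleteSpace E]
    (Θ : ℂ → E →L[ℂ] E)
    (hana : ∀ z ∈ Metric.ball (0 : ℂ) 1, AnalyticAt ℂ Θ z)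
    (hcontr : ∀ z ∈ Metric.ball (0 : ℂ) 1, ‖Θ z‖ ≤ 1)
    (T : lp (fun _ : ℕ => E) 2 →L[ℂ] lp (fun _ : ℕ => E) 2)
    (hT : ∀ f, ∀ n : ℕ, (T f) n =
      ∑ k ∈ Finset.range (n + 1),
        ((k.factorial : ℂ)⁻¹ • iteratedDeriv k Θ 0) (f (n - k))) :
    (adjoint T ∘L T = 1 ∧ T ∘L adjoint T = 1) ↔
      ((∀ z ∈ Metric.ball (0 : ℂ) 1, Θ z = Θ 0) ∧
        adjoint (Θ 0) ∘L Θ 0 = 1 ∧ Θ 0 ∘L adjoint (Θ 0) = 1) :=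
  statement11_general E Θ hana T hT
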